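/- arXiv:2601.07057 — 4 statements merged into one kernel-verified Lean document; each statement's English description precedes it below -/
import Mathlib

section
/- If k is an integral domain with unity, then every idempotent of the quandle ring k[Core(Z)], where Core(Z) is the set Z with operation a*b = 2b - a, is either 0 or a basis element e_a for some a in Z. -/
/-- Product on the quandle ring k[Core(ℤ)]: e_a · e_b = e_{2b-a}. -/
noncomputable def coreMul {k : Type*} [CommRing k] (u v : ℤ →₀ k) : ℤ →₀ k :=
  u.sum fun a α => v.sum fun b β => Finsupp.single (2 * b - a) (α * β)

/-- If k is an integral domain with unity, every idempotent of k[Core(ℤ)]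
is either 0 or a basis element e_a. -/
theorem stmt0 {k : Type*} [CommRing k] [IsDomain k] (u : ℤ →₀ k)
    (h : coreMul u u = u) :
    u = 0 ∨ ∃ a : ℤ, u = Finsupp.single a (1 : k) := by
  rcases eq_or_ne u 0 with h0 | h0
  · exact Or.inl h0
  right
  have hne : u.support.Nonempty := Finsupp.support_nonempty_iff.mpr h0
  set M := u.support.max' hne with hMdef
  set m := u.support.min' hne with hmdef
  have hMmem : M ∈ u.support := u.support.max'_mem hne
  have hmmem : m ∈ u.support := u.support.min'_mem hne
  have hmle : m ≤ M := Finset.min'_le _ _ hMmem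
  have coeff : ∀ c, (coreMul u u) c =
      ∑ a ∈ u.support, ∑ b ∈ u.support, if 2 * b - a = c then u a * u b else 0 := by
    intro c
    rw [coreMul, Finsupp.sum_apply, Finsupp.sum]
    refine Finset.sum_congr rfl fun a _ => ?_
    rw [Finsupp.sum_apply, Finsupp.sum]
    refine Finset.sum_congr rfl fun b _ => ?_
    rw [Finsupp.single_apply]
  have key : (coreMul u u) (2 * M - m) = u m * u M := by
    rw [coeff]
    rw [Finset.sum_eq_single m]
    · rw [Finset.sum_eq_single M]
      · simp
      · intro b hb hbM
        have hbM' : b ≤ M := Finset.le_max' _ _ hb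
        have : ¬ (2 * b - m = 2 * M - m) := by omega
        simp [this]
      · intro h'; exact absurd hMmem h'
    · intro a ha ham
      apply Finset.sum_eq_zero
      intro b hb
      have hbM : b ≤ M := Finset.le_max' _ _ hb
      have ham' : m ≤ a := Finset.min'_le _ _ ha
      have : ¬ (2 * b - a = 2 * M - m) := by omega
      simp [this]
    · intro h'; exact absurd hmmem h'
  have hum : u m ≠ 0 := Finsupp.mem_support_iff.mp hmmem
  have huM : u M ≠ 0 := Finsupp.mem_support_iff.mp hMmem
  have hmem : (2 * M - m) ∈ u.support := by
    rw [Finsupp.mem_support_iff, ← h, key]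
    exact mul_ne_zero hum huM
  have hle : 2 * M - m ≤ M := Finset.le_max' _ _ hmem
  have heq : m = M := le_antisymm hmle (by omega)
  have k2 := key
  rw [h] at k2
  have h2m : 2 * M - m = m := by omega
  rw [h2m, ← heq] at k2
  have hum1 : u m = 1 := by
    have := mul_left_cancel₀ hum (k2.symm.trans (mul_one (u m)).symm)
    exact this
  refine ⟨m, ?_⟩
  rw [Finsupp.eq_single_iff]
  refine ⟨fun x hx => ?_, hum1⟩
  have h1 := Finset.le_max' _ _ hx
  have h2 := Finset.min'_le _ _ hx
  simp only [Finset.mem_singleton]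
  omega
end

section
/- For the dihedral quandle R_3, the square of the augmentation ideal Δ(R_3) in Z[R_3] is generated as an abelian group by E_1 + E_2 and 3·E_2, where E_i = e_i - e_0. -/
/-- Product on the quandle ring ℤ[R_3]: e_x · e_y = e_{2y-x}. -/
def qr (u v : ZMod 3 → ℤ) : ZMod 3 → ℤ :=
  fun z => ∑ x, ∑ y, if 2 * y - x = z then u x * v y else 0

/-- Basis element e_i. -/
def e (i : ZMod 3) : ZMod 3 → ℤ := fun z => if z = i then 1 else 0

/-- E_i = e_i - e_0. -/
def E (i : ZMod 3) : ZMod 3 → ℤ := e i - e 0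

/-- The augmentation ideal Δ(R_3) = {u | ε(u) = 0}. -/
def Δ : Set (ZMod 3 → ℤ) := {u | ∑ x, u x = 0}

lemma sum3 (u : ZMod 3 → ℤ) : ∑ x, u x = u 0 + u 1 + u 2 := Fin.sum_univ_three u

lemma qr_expand (u v : ZMod 3 → ℤ) (hu : u ∈ Δ) (hv : v ∈ Δ) :
    qr u v = (u 1 * v 1 - u 1 * v 2 - u 2 * v 1 - 2 * (u 2 * v 2)) • (E 1 + E 2)
      + (-(u 1 * v 1) + u 2 * v 2) • ((3:ℤ) • E 2) := by
  have hu0 : u 0 = -u 1 - u 2 := by have := hu; simp [Δ, sum3] at this; linarith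
  have hv0 : v 0 = -v 1 - v 2 := by have := hv; simp [Δ, sum3] at this; linarith
  funext z
  obtain rfl | rfl | rfl : z = 0 ∨ z = 1 ∨ z = 2 := by revert z; decide
  all_goals
    simp (config := {decide := true}) [qr, E, e, sum3, hu0, hv0,
      show ((0:ZMod 3) = 2) = False by decide, show ((1:ZMod 3) = 2) = False by decide,
      show ((2:ZMod 3) = 1) = False by decide, show ((2:ZMod 3) = 0) = False by decide,
      show ((0:ZMod 3) = 1) = False by decide, show ((1:ZMod 3) = 0) = False by decide] <;>
    ring

lemma E1_mem : E 1 ∈ Δ := by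
  simp (config := {decide := true}) [Δ, sum3, E, e]

lemma E2_mem : E 2 ∈ Δ := by
  simp (config := {decide := true}) [Δ, sum3, E, e]

lemma gen1_eq : E 1 + E 2 = -(qr (E 1) (E 2)) := by
  funext z
  fin_cases z <;> simp (config := {decide := true}) [qr, E, e, sum3]

lemma gen2_eq : (3:ℤ) • E 2 = -(qr (E 1) (E 2) + qr (E 1) (E 1)) := by
  funext z
  fin_cases z <;> simp (config := {decide := true}) [qr, E, e, sum3]

/-- Δ²(R_3) is generated as an abelian group by E_1 + E_2 and 3·E_2. -/
theorem stmt6 :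
    AddSubgroup.closure {w : ZMod 3 → ℤ | ∃ u ∈ Δ, ∃ v ∈ Δ, w = qr u v}
      = AddSubgroup.closure {E 1 + E 2, (3 : ℤ) • E 2} := by
  apply le_antisymm
  · rw [AddSubgroup.closure_le]
    rintro w ⟨u, hu, v, hv, rfl⟩
    rw [SetLike.mem_coe, qr_expand u v hu hv]
    exact AddSubgroup.add_mem _
      (AddSubgroup.zsmul_mem _ (AddSubgroup.subset_closure (by left; rfl)) _)
      (AddSubgroup.zsmul_mem _ (AddSubgroup.subset_closure (by right; rfl)) _)
  · rw [AddSubgroup.closure_le]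
    intro w hw
    have h12 : qr (E 1) (E 2) ∈
        AddSubgroup.closure {w : ZMod 3 → ℤ | ∃ u ∈ Δ, ∃ v ∈ Δ, w = qr u v} :=
      AddSubgroup.subset_closure ⟨E 1, E1_mem, E 2, E2_mem, rfl⟩
    have h11 : qr (E 1) (E 1) ∈
        AddSubgroup.closure {w : ZMod 3 → ℤ | ∃ u ∈ Δ, ∃ v ∈ Δ, w = qr u v} :=
      AddSubgroup.subset_closure ⟨E 1, E1_mem, E 1, E1_mem, rfl⟩
    rcases hw with rfl | rfl
    · rw [SetLike.mem_coe, gen1_eq]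
      exact AddSubgroup.neg_mem _ h12
    · rw [SetLike.mem_coe, gen2_eq]
      exact AddSubgroup.neg_mem _ (AddSubgroup.add_mem _ h12 h11)
end

section
/- The integral quandle ring Z[R_3] of the dihedral 3-element quandle contains no nonzero idempotent u with augmentation ε(u) = 0. -/
/-- ℤ[R_3] has no nonzero idempotent with augmentation 0. -/
theorem stmt8 (u : ZMod 3 → ℤ) (hidem : qr u u = u) (haug : ∑ x, u x = 0) :
    u = 0 := by
  have e : (Finset.univ : Finset (ZMod 3)) = {0,1,2} := by decide
  have h0 := congrFun hidem 0
  have h1 := congrFun hidem 1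
  have h2 := congrFun hidem 2
  simp only [qr, e] at h0 h1 h2
  rw [e] at haug
  simp (config := { decide := true }) [Finset.sum_insert, Finset.mem_insert,
    Finset.sum_singleton] at h0 h1 h2 haug
  set a := u 0; set b := u 1; set c := u 2
  have hab : a = b := by
    have key : (a - b) * (3 * (a + b) - 1) = 0 := by nlinarith [h0, h1, haug]
    rcases mul_eq_zero.mp key with h | h
    · linarith
    · omega
  have hbc : b = c := by
    have key : (b - c) * (-3 * a - 1) = 0 := by nlinarith [h1, h2, haug]
    rcases mul_eq_zero.mp key with h | h
    · linarith
    · omega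
  have ha : a = 0 := by omega
  funext z
  fin_cases z
  · exact ha
  · show b = 0; omega
  · show c = 0; omega
end

section
/- Every finite commutative quandle has odd cardinality. -/
/-- Every finite nonempty commutative quandle has odd cardinality. -/
theorem stmt13 {X : Type*} [Fintype X] [Nonempty X] (op : X → X → X)
    (hidem : ∀ x, op x x = x)
    (hR : ∀ y, Function.Bijective fun x => op x y)
    (hdist : ∀ x y z, op (op x y) z = op (op x z) (op y z))
    (hcomm : ∀ x y, op x y = op y x) :
    Odd (Fintype.card X) := by
  classical
  obtain ⟨z⟩ := ‹Nonempty X›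
  set T : Finset (X × X) := Finset.univ.filter (fun p => op p.1 p.2 = z) with hT
  have hcardT : T.card = Fintype.card X := by
    apply Finset.card_bij (fun p _ => p.1)
    · intros; exact Finset.mem_univ _
    · rintro ⟨a, b⟩ ha ⟨c, d⟩ hc h
      simp only at h
      subst h
      simp only [hT, Finset.mem_filter] at ha hc
      have hb : op b a = z := (hcomm a b) ▸ ha.2
      have hd : op d a = z := (hcomm a d) ▸ hc.2
      have := (hR a).1 (hb.trans hd.symm)
      simp_all
    · intro x _
      obtain ⟨y, hy⟩ := (hR x).2 z
      refine ⟨(x, y), ?_, rfl⟩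
      simp only [hT, Finset.mem_filter, Finset.mem_univ, true_and]
      simpa [hcomm] using hy
  have hzz : (z, z) ∈ T := by simp [hT, hidem]
  set E : Finset (X × X) := T.erase (z, z) with hE
  have hmemE : ∀ p ∈ E, (p.2, p.1) ∈ E := by
    rintro ⟨a, b⟩ hmem
    simp only [hE, hT, Finset.mem_erase, Finset.mem_filter, Finset.mem_univ, true_and]
      at hmem ⊢
    refine ⟨fun h => hmem.1 ?_, by rw [hcomm]; exact hmem.2⟩
    simp only [Prod.ext_iff] at h ⊢
    exact ⟨h.2, h.1⟩
  have h0 : ∑ _p ∈ E, (1 : ZMod 2) = 0 := by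
    apply Finset.sum_involution (fun p _ => (p.2, p.1))
    · intro _ _; decide
    · rintro ⟨a, b⟩ hmem -
      intro h
      simp only [Prod.mk.injEq] at h
      obtain ⟨rfl, -⟩ := h
      simp only [hE, hT, Finset.mem_erase, Finset.mem_filter, Finset.mem_univ, true_and] at hmem
      have hbz : b = z := by rw [← hidem b]; exact hmem.2
      exact hmem.1 (by simp [hbz])
    · exact hmemE
    · intro p _; rfl
  have hEven : Even E.card := by
    have : ((E.card : ZMod 2)) = 0 := by simpa using h0
    have h2 : 2 ∣ E.card := (ZMod.natCast_eq_zero_iff _ _).1 this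
    exact even_iff_two_dvd.2 h2
  have hsplit : E.card + 1 = T.card := by
    rw [hE, Finset.card_erase_of_mem hzz]
    have : 1 ≤ T.card := Finset.card_pos.2 ⟨_, hzz⟩
    omega
  obtain ⟨k, hk⟩ := hEven
  exact ⟨k, by omega⟩
end
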